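/- For n ∈ ℕ let f_n := D_{2^{n+1}} − D_{2^n}. Then sup_{m∈ℕ} |S_{2^m}(f_n)(x)| = D_{2^n}(x) for every x ∈ [0,1), and consequently for every p ∈ (0, 1]: ‖f_n‖_{H_p} = 2^{n(1−1/p)}. -/

import Mathlib

open MeasureTheory Filter
open scoped ENNReal NNReal

noncomputable section

namespace Walsh

/-- Lebesgue measure restricted to `[0,1)`. -/
def μI : Measure ℝ := volume.restrict (Set.Ico (0:ℝ) 1)

/-- The `k`-th binary digit `x_k` of `x ∈ [0,1)`, using the expansion terminating
in `0`'s for dyadic rationals. -/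
def digit (k : ℕ) (x : ℝ) : ℕ := (⌊x * 2 ^ (k + 1)⌋).toNat % 2

/-- `ε_k(n)`, the `k`-th binary coefficient of `n`. -/
def eps (k n : ℕ) : ℕ := if n.testBit k then 1 else 0

/-- Walsh–Paley function `w_n(x) = (-1)^{Σ_k ε_k(n) x_k}`. -/
def walsh (n : ℕ) (x : ℝ) : ℝ :=
  (-1 : ℝ) ^ (∑ k ∈ Finset.range (n + 1), eps k n * digit k x)

/-- Walsh–Dirichlet kernel `D_n = Σ_{k=0}^{n-1} w_k`. -/
def D (n : ℕ) (x : ℝ) : ℝ := ∑ k ∈ Finset.range n, walsh k x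

/-- Walsh–Fejér kernel `K_n = (1/n) Σ_{k=1}^{n} D_k`. -/
def K (n : ℕ) (x : ℝ) : ℝ := (1 / (n : ℝ)) * ∑ k ∈ Finset.Icc 1 n, D k x

/-- Partial sums `S_M(f) = Σ_{i=0}^{M-1} f̂(i) w_i` of the Walsh–Fourier series. -/
def S (f : ℝ → ℝ) (M : ℕ) (x : ℝ) : ℝ :=
  ∑ i ∈ Finset.range M, (∫ t in Set.Ico (0:ℝ) 1, f t * walsh i t) * walsh i x

/-- `Q_n = q_0 + ⋯ + q_{n-1}`. -/
def Q (q : ℕ → ℝ) (n : ℕ) : ℝ := ∑ k ∈ Finset.range n, q k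

/-- Walsh–Nörlund mean `t_n(f) = (1/Q_n) Σ_{k=1}^n q_{n-k} S_k(f)`. -/
def t (q : ℕ → ℝ) (n : ℕ) (f : ℝ → ℝ) (x : ℝ) : ℝ :=
  (1 / Q q n) * ∑ k ∈ Finset.Icc 1 n, q (n - k) * S f k x

/-- Walsh–Nörlund kernel `F_n = (1/Q_n) Σ_{k=1}^n q_{n-k} D_k`. -/
def F (q : ℕ → ℝ) (n : ℕ) (x : ℝ) : ℝ :=
  (1 / Q q n) * ∑ k ∈ Finset.Icc 1 n, q (n - k) * D k x

/-- Maximal Nörlund operator `t^*(f) = sup_{n ≥ 1} |t_n(f)|`, valued in `ℝ≥0∞`. -/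
def tstar (q : ℕ → ℝ) (f : ℝ → ℝ) (x : ℝ) : ℝ≥0∞ :=
  ⨆ n ∈ Set.Ici 1, ENNReal.ofReal |t q n f x|

/-- `L^p[0,1)` quasinorm (`0 < p ≤ 1`) of a real function, valued in `ℝ≥0∞`. -/
def LpNorm (p : ℝ) (g : ℝ → ℝ) : ℝ≥0∞ :=
  (∫⁻ x in Set.Ico (0:ℝ) 1, ENNReal.ofReal |g x| ^ p) ^ (1 / p)

/-- `L^p[0,1)` quasinorm of an `ℝ≥0∞`-valued function. -/
def LpNormE (p : ℝ) (g : ℝ → ℝ≥0∞) : ℝ≥0∞ :=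
  (∫⁻ x in Set.Ico (0:ℝ) 1, g x ^ p) ^ (1 / p)

/-- `L^∞[0,1)` norm. -/
def LinfNorm (g : ℝ → ℝ) : ℝ≥0∞ := essSup (fun x => ENNReal.ofReal |g x|) μI

/-- Dyadic maximal function `E^*(f) = sup_m |S_{2^m}(f)|`, valued in `ℝ≥0∞`. -/
def maxS (f : ℝ → ℝ) (x : ℝ) : ℝ≥0∞ := ⨆ m : ℕ, ENNReal.ofReal |S f (2 ^ m) x|

/-- Dyadic Hardy space quasinorm `‖f‖_{H_p} = ‖sup_m |S_{2^m} f|‖_{L^p}`. -/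
def HpNorm (p : ℝ) (f : ℝ → ℝ) : ℝ≥0∞ :=
  (∫⁻ x in Set.Ico (0:ℝ) 1, maxS f x ^ p) ^ (1 / p)

/-- Dyadic (logical) addition `x ∔ y = Σ_k |x_k - y_k| 2^{-(k+1)}`. -/
def dadd (x y : ℝ) : ℝ :=
  ∑' k : ℕ, |(digit k x : ℝ) - (digit k y : ℝ)| * (2 : ℝ)⁻¹ ^ (k + 1)

/-- The dyadic interval `I_N = [0, 2^{-N})`. -/
def IN (N : ℕ) : Set ℝ := Set.Ico (0:ℝ) (1 / 2 ^ N)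

/-- `F_{n,1} = (w_n/Q_n) Σ_{j=1}^r Q_{n^{(j-1)}} w_{2^{n_j}} D_{2^{n_j}}`,
the first part of the Nörlund kernel decomposition. The sum over the binary
decomposition `n = 2^{n_1} + ⋯ + 2^{n_r}` is re-indexed over the set bit
positions `i` of `n`; if `i = n_j` then `n^{(j-1)} = n mod 2^{i+1}`. -/
def F1 (q : ℕ → ℝ) (n : ℕ) (x : ℝ) : ℝ :=
  (walsh n x / Q q n) *
    ∑ i ∈ Finset.range (n + 1),
      if n.testBit i then Q q (n % 2 ^ (i + 1)) * walsh (2 ^ i) x * D (2 ^ i) x else 0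

end Walsh

/-!
Since `D_{2^{n+1}} - D_{2^n} = Σ_{2^n ≤ k < 2^{n+1}} w_k` and the Walsh system is orthonormal on
`[0,1)`, the partial sum `S_{2^m}(f_n)` vanishes for `m ≤ n` and equals `f_n` for `m > n`. As
`f_n = w_{2^n} D_{2^n}` with `|w_{2^n}| = 1`, and `D_{2^n} = 2^n 𝟙_{[0, 2^{-n})}` is nonnegative,
the supremum is `D_{2^n}`, whose `p`-th power integrates to `2^{n(p-1)}`.

Orthogonality reduces, via `w_a w_b = w_{a ⊕ b}`, to `∫ w_m = 0` for `m ≠ 0`; this follows by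
induction on `m` from the self-similarity `w_m(u/2) = w_{⌊m/2⌋}(u)`,
`w_m((u+1)/2) = (-1)^m w_{⌊m/2⌋}(u)` on `[0,1)`.
-/

lemma ciSup_ite_lt {α : Type*} [ConditionallyCompleteLattice α] {a b : α} (hba : b ≤ a) (N : ℕ) :
    ⨆ m : ℕ, (if N < m then a else b) = a :=
  ciSup_eq_of_forall_le_of_forall_lt_exists_gt (fun m => by split_ifs; exacts [le_rfl, hba])
    fun w hw => ⟨N + 1, by simpa using hw⟩

namespace Walsh

lemma digit_eq_mod_two {k j : ℕ} {x : ℝ} (h₁ : (j : ℝ) ≤ x * 2 ^ (k + 1))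
    (h₂ : x * 2 ^ (k + 1) < j + 1) : digit k x = j % 2 := by
  have hfloor : ⌊x * 2 ^ (k + 1)⌋ = j := Int.floor_eq_iff.2 ⟨mod_cast h₁, mod_cast h₂⟩
  simp [digit, hfloor]

lemma digit_succ_div_two (k : ℕ) (u : ℝ) : digit (k + 1) (u / 2) = digit k u := by
  unfold digit; ring_nf

lemma digit_succ_add_one_div_two (k : ℕ) {u : ℝ} (hu : 0 ≤ u) :
    digit (k + 1) ((u + 1) / 2) = digit k u := by
  have hfloor : ⌊(u + 1) / 2 * 2 ^ (k + 1 + 1)⌋ = ⌊u * 2 ^ (k + 1)⌋ + ((2 * 2 ^ k : ℕ) : ℤ) := by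
    rw [← Int.floor_add_intCast]; push_cast; ring_nf
  unfold digit
  rw [hfloor, Int.toNat_add (Int.floor_nonneg.2 (by positivity)) (by positivity),
    Int.toNat_natCast, Nat.add_mul_mod_self_left]

lemma measurable_digit (k : ℕ) : Measurable (digit k) :=
  (measurable_from_top (f := fun z : ℤ => z.toNat % 2)).comp
    (Int.measurable_floor.comp (measurable_id.mul_const _))

lemma sum_range_eps_mul_eq_sum_range_size {m N : ℕ} (h : m < 2 ^ N) (c : ℕ → ℕ) :
    ∑ k ∈ Finset.range N, eps k m * c k = ∑ k ∈ Finset.range m.size, eps k m * c k :=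
  Finset.eventually_constant_sum
    (fun k hk => by simp [eps, Nat.testBit_lt_two_pow (Nat.size_le.1 hk)]) (Nat.size_le.2 h)

lemma walsh_eq_neg_one_pow_sum {m N : ℕ} (h : m < 2 ^ N) (x : ℝ) :
    walsh m x = (-1) ^ ∑ k ∈ Finset.range N, eps k m * digit k x := by
  rw [walsh, sum_range_eps_mul_eq_sum_range_size h,
    sum_range_eps_mul_eq_sum_range_size (Nat.lt_of_succ_lt (m + 1).lt_two_pow_self)]

lemma walsh_zero (x : ℝ) : walsh 0 x = 1 := by
  simp [walsh, eps]

lemma abs_walsh (m : ℕ) (x : ℝ) : |walsh m x| = 1 := by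
  simp [walsh]

lemma measurable_walsh (m : ℕ) : Measurable (walsh m) :=
  (measurable_from_top (f := fun s : ℕ => (-1 : ℝ) ^ s)).comp
    (Finset.measurable_sum _ fun k _ => (measurable_digit k).const_mul _)

lemma walsh_mul (a b : ℕ) (x : ℝ) : walsh a x * walsh b x = walsh (a ^^^ b) x := by
  have ha : a < 2 ^ (a + b) := a.lt_two_pow_self.trans_le (Nat.pow_le_pow_right two_pos (by omega))
  have hb : b < 2 ^ (a + b) := b.lt_two_pow_self.trans_le (Nat.pow_le_pow_right two_pos (by omega))
  simp only [walsh_eq_neg_one_pow_sum ha, walsh_eq_neg_one_pow_sum hb,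
    walsh_eq_neg_one_pow_sum (Nat.xor_lt_two_pow ha hb), ← Finset.prod_pow_eq_pow_sum,
    ← Finset.prod_mul_distrib]
  refine Finset.prod_congr rfl fun k _ => ?_
  simp only [eps, Nat.testBit_xor]
  cases a.testBit k <;> cases b.testBit k <;> simp [← mul_pow]

lemma walsh_two_pow (n : ℕ) (x : ℝ) : walsh (2 ^ n) x = (-1) ^ digit n x := by
  rw [walsh_eq_neg_one_pow_sum (N := n + 1) (Nat.pow_lt_pow_succ one_lt_two),
    Finset.sum_eq_single n (fun k _ hk => by simp [eps, Ne.symm hk]) (by simp)]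
  simp [eps]

lemma two_pow_add_eq_xor {n j : ℕ} (h : j < 2 ^ n) : 2 ^ n + j = 2 ^ n ^^^ j := by
  rw [← mul_one (2 ^ n), Nat.two_pow_add_eq_or_of_lt h, mul_one]
  refine Nat.eq_of_testBit_eq fun k => ?_
  simp only [Nat.testBit_or, Nat.testBit_xor, Nat.testBit_two_pow]
  by_cases hnk : n = k
  · subst hnk; simp [Nat.testBit_lt_two_pow h]
  · simp [hnk]

lemma walsh_two_pow_add {n j : ℕ} (h : j < 2 ^ n) (x : ℝ) :
    walsh (2 ^ n + j) x = walsh (2 ^ n) x * walsh j x := by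
  rw [walsh_mul, two_pow_add_eq_xor h]

lemma walsh_div_two {u : ℝ} (hu : u ∈ Set.Ico (0 : ℝ) 1) (m : ℕ) :
    walsh m (u / 2) = walsh (m / 2) u := by
  have hdigit : digit 0 (u / 2) = 0 := digit_eq_mod_two (j := 0) (by simpa using hu.1)
    (by simpa using hu.2)
  rw [walsh_eq_neg_one_pow_sum (N := m + 1) (Nat.lt_of_succ_lt (m + 1).lt_two_pow_self),
    walsh_eq_neg_one_pow_sum (N := m) ((Nat.div_le_self m 2).trans_lt m.lt_two_pow_self),
    Finset.sum_range_succ']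
  simp [digit_succ_div_two, hdigit, eps, Nat.testBit_div_two]

lemma walsh_add_one_div_two {u : ℝ} (hu : u ∈ Set.Ico (0 : ℝ) 1) (m : ℕ) :
    walsh m ((u + 1) / 2) = (-1) ^ m * walsh (m / 2) u := by
  have hdigit : digit 0 ((u + 1) / 2) = 1 := digit_eq_mod_two (j := 1)
    (by norm_num; linarith [hu.1]) (by norm_num; linarith [hu.2])
  have hparity : (-1 : ℝ) ^ eps 0 m = (-1) ^ m := by
    rw [neg_one_pow_eq_pow_mod_two (n := m)]
    rcases Nat.mod_two_eq_zero_or_one m with h | h <;> simp [eps, h]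
  rw [walsh_eq_neg_one_pow_sum (N := m + 1) (Nat.lt_of_succ_lt (m + 1).lt_two_pow_self),
    walsh_eq_neg_one_pow_sum (N := m) ((Nat.div_le_self m 2).trans_lt m.lt_two_pow_self),
    Finset.sum_range_succ', pow_add, mul_comm, hdigit, mul_one, hparity]
  simp [digit_succ_add_one_div_two _ hu.1, eps, Nat.testBit_div_two]

lemma integrableOn_walsh (m : ℕ) {s : Set ℝ} (hs : volume s ≠ ∞) :
    IntegrableOn (walsh m) s :=
  Measure.integrableOn_of_bounded hs (measurable_walsh m).aestronglyMeasurable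
    (Eventually.of_forall fun x => (abs_walsh m x).le)

lemma setIntegral_Ico_zero_one_eq_half {g : ℝ → ℝ} (hg : IntervalIntegrable g volume 0 1) :
    ∫ x in Set.Ico (0 : ℝ) 1, g x =
      2⁻¹ * ((∫ u in Set.Ico (0 : ℝ) 1, g (u / 2)) +
        ∫ u in Set.Ico (0 : ℝ) 1, g ((u + 1) / 2)) := by
  have hIco : ∀ h : ℝ → ℝ, ∫ x in Set.Ico (0 : ℝ) 1, h x = ∫ x in (0 : ℝ)..1, h x := fun h => by
    rw [integral_Ico_eq_integral_Ioc, intervalIntegral.integral_of_le zero_le_one]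
  have hleft : ∫ u in (0 : ℝ)..1, g (u / 2) = 2 * ∫ x in (0 : ℝ)..1 / 2, g x := by
    simp [intervalIntegral.integral_comp_div g two_ne_zero (a := 0) (b := 1)]
  have hright : ∫ u in (0 : ℝ)..1, g ((u + 1) / 2) = 2 * ∫ x in (1 / 2 : ℝ)..1, g x := by
    simp_rw [add_div]
    convert intervalIntegral.integral_comp_div_add g two_ne_zero (1 / 2) (a := 0) (b := 1)
      using 2
    norm_num
  rw [hIco, hIco, hIco, hleft, hright, ← mul_add,
    intervalIntegral.integral_add_adjacent_intervals
      (hg.mono_set (Set.uIcc_subset_uIcc (by simp) (by norm_num [Set.mem_uIcc])))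
      (hg.mono_set (Set.uIcc_subset_uIcc (by norm_num [Set.mem_uIcc]) (by simp)))]
  ring

lemma integral_walsh (m : ℕ) :
    ∫ x in Set.Ico (0 : ℝ) 1, walsh m x = if m = 0 then 1 else 0 := by
  induction m using Nat.strong_induction_on with
  | _ m ih =>
  rcases Nat.eq_zero_or_pos m with rfl | hm
  · simp [walsh_zero]
  have hhalf : ∫ x in Set.Ico (0 : ℝ) 1, walsh m x =
      2⁻¹ * (1 + (-1) ^ m) * ∫ u in Set.Ico (0 : ℝ) 1, walsh (m / 2) u := by
    rw [setIntegral_Ico_zero_one_eq_half ((intervalIntegrable_iff_integrableOn_Ioc_of_le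
        zero_le_one).2 (integrableOn_walsh m measure_Ioc_lt_top.ne)),
      setIntegral_congr_fun measurableSet_Ico fun u hu => walsh_div_two hu m,
      setIntegral_congr_fun measurableSet_Ico fun u hu => walsh_add_one_div_two hu m,
      integral_const_mul]
    ring
  rw [hhalf, if_neg hm.ne']
  rcases Nat.even_or_odd m with ⟨r, rfl⟩ | hodd
  · rw [show (r + r) / 2 = r by omega, ih r (by omega), if_neg (by omega)]; simp
  · rw [hodd.neg_one_pow]; ring

lemma S_sum_walsh (s : Finset ℕ) (M : ℕ) (x : ℝ) :
    S (fun y => ∑ k ∈ s, walsh k y) M x = ∑ k ∈ s with k < M, walsh k x := by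
  have hcoeff : ∀ i, ∫ t in Set.Ico (0 : ℝ) 1, (∑ k ∈ s, walsh k t) * walsh i t =
      if i ∈ s then 1 else 0 := fun i => by
    simp_rw [Finset.sum_mul, walsh_mul]
    rw [integral_finsetSum _ fun k _ => integrableOn_walsh _ measure_Ico_lt_top.ne]
    simp [integral_walsh, xor_eq_zero_iff]
  simp only [S, hcoeff, ite_mul, one_mul, zero_mul, Finset.sum_ite_mem]
  congr 1
  ext k
  simp [and_comm]

lemma D_two_pow_succ_sub_eq_sum (n : ℕ) (x : ℝ) :
    D (2 ^ (n + 1)) x - D (2 ^ n) x = ∑ k ∈ Finset.Ico (2 ^ n) (2 ^ (n + 1)), walsh k x :=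
  (Finset.sum_Ico_eq_sub _ (Nat.pow_le_pow_right two_pos n.le_succ)).symm

lemma D_two_pow_succ_sub_eq_mul (n : ℕ) (x : ℝ) :
    D (2 ^ (n + 1)) x - D (2 ^ n) x = walsh (2 ^ n) x * D (2 ^ n) x := by
  rw [D_two_pow_succ_sub_eq_sum, Finset.sum_Ico_eq_sum_range, D, Finset.mul_sum,
    show 2 ^ (n + 1) - 2 ^ n = 2 ^ n by rw [pow_succ]; omega]
  exact Finset.sum_congr rfl fun j hj => walsh_two_pow_add (Finset.mem_range.1 hj) x

lemma D_two_pow {x : ℝ} (hx : x ∈ Set.Ico (0 : ℝ) 1) (m : ℕ) :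
    D (2 ^ m) x = if x * 2 ^ m < 1 then 2 ^ m else 0 := by
  induction m with
  | zero => simp [D, walsh_zero, hx.2]
  | succ m ih =>
    have hstep : D (2 ^ (m + 1)) x = (1 + (-1) ^ digit m x) * D (2 ^ m) x := by
      rw [← walsh_two_pow, add_mul, one_mul, ← D_two_pow_succ_sub_eq_mul]; ring
    have hpow : x * 2 ^ (m + 1) = 2 * (x * 2 ^ m) := by ring
    have hnonneg : 0 ≤ x * 2 ^ m := mul_nonneg hx.1 (by positivity)
    rw [hstep, ih]
    by_cases h₁ : x * 2 ^ m < 1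
    · by_cases h₂ : x * 2 ^ (m + 1) < 1
      · rw [digit_eq_mod_two (j := 0) (by simp [hpow, hnonneg]) (by simpa using h₂),
          if_pos h₁, if_pos h₂, pow_succ]
        norm_num [mul_comm]
      · rw [digit_eq_mod_two (j := 1) (by push_cast; linarith) (by push_cast; linarith)]
        simp [h₁, h₂]
    · have h₂ : ¬ x * 2 ^ (m + 1) < 1 := by rw [hpow]; linarith
      simp [h₁, h₂]

lemma D_two_pow_nonneg {x : ℝ} (hx : x ∈ Set.Ico (0 : ℝ) 1) (m : ℕ) : 0 ≤ D (2 ^ m) x := by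
  rw [D_two_pow hx]
  split_ifs <;> positivity

lemma lintegral_ofReal_D_two_pow_rpow (m : ℕ) {p : ℝ} (hp : 0 < p) :
    ∫⁻ x in Set.Ico (0 : ℝ) 1, ENNReal.ofReal (D (2 ^ m) x) ^ p =
      ENNReal.ofReal (2 ^ ((m : ℝ) * (p - 1))) := by
  have hindicator : ∀ x ∈ Set.Ico (0 : ℝ) 1, ENNReal.ofReal (D (2 ^ m) x) ^ p =
      (IN m).indicator (fun _ => ENNReal.ofReal (2 ^ m) ^ p) x := fun x hx => by
    classical
    rw [D_two_pow hx, Set.indicator_apply, IN, Set.mem_Ico, lt_div_iff₀ (by positivity)]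
    split_ifs <;> simp_all [ENNReal.zero_rpow_of_pos hp]
  have hIN : IN m ⊆ Set.Ico 0 1 :=
    Set.Ico_subset_Ico_right (div_le_one_of_le₀ (one_le_pow₀ one_le_two) (by positivity))
  rw [setLIntegral_congr_fun measurableSet_Ico hindicator,
    lintegral_indicator_const (s := IN m) measurableSet_Ico,
    Measure.restrict_apply (t := IN m) measurableSet_Ico, Set.inter_eq_left.2 hIN, IN,
    Real.volume_Ico, sub_zero, ENNReal.ofReal_rpow_of_nonneg (by positivity) hp.le,
    ← ENNReal.ofReal_mul (by positivity),
    ← Real.rpow_natCast, ← Real.rpow_mul zero_le_two, one_div, ← Real.rpow_neg zero_le_two,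
    ← Real.rpow_add two_pos]
  ring_nf

lemma S_D_two_pow_succ_sub (n m : ℕ) (x : ℝ) :
    S (fun y => D (2 ^ (n + 1)) y - D (2 ^ n) y) (2 ^ m) x =
      if n < m then D (2 ^ (n + 1)) x - D (2 ^ n) x else 0 := by
  simp_rw [D_two_pow_succ_sub_eq_sum, S_sum_walsh]
  split_ifs with h
  · rw [Finset.filter_true_of_mem fun k hk =>
      (Finset.mem_Ico.1 hk).2.trans_le (Nat.pow_le_pow_right two_pos h)]
  · rw [Finset.filter_false_of_mem fun k hk =>
      ((Nat.pow_le_pow_right two_pos (not_lt.1 h)).trans (Finset.mem_Ico.1 hk).1).not_gt,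
      Finset.sum_empty]

lemma abs_S_D_two_pow_succ_sub (n m : ℕ) {x : ℝ} (hx : x ∈ Set.Ico (0 : ℝ) 1) :
    |S (fun y => D (2 ^ (n + 1)) y - D (2 ^ n) y) (2 ^ m) x| =
      if n < m then D (2 ^ n) x else 0 := by
  rw [S_D_two_pow_succ_sub, apply_ite abs, D_two_pow_succ_sub_eq_mul, abs_mul, abs_walsh, one_mul,
    abs_of_nonneg (D_two_pow_nonneg hx n), abs_zero]

lemma maxS_D_two_pow_succ_sub (n : ℕ) {x : ℝ} (hx : x ∈ Set.Ico (0 : ℝ) 1) :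
    maxS (fun y => D (2 ^ (n + 1)) y - D (2 ^ n) y) x = ENNReal.ofReal (D (2 ^ n) x) := by
  simp only [maxS, abs_S_D_two_pow_succ_sub n _ hx, apply_ite ENNReal.ofReal, ENNReal.ofReal_zero]
  exact ciSup_ite_lt zero_le n

end Walsh

/-- for `f_n = D_{2^{n+1}} - D_{2^n}` one has
`sup_m |S_{2^m}(f_n)| = D_{2^n}` pointwise on `[0,1)` and `‖f_n‖_{H_p} = 2^{n(1-1/p)}`. -/
theorem maximal_partial_sum_of_dirichlet_difference (n : ℕ) :
    (∀ x ∈ Set.Ico (0:ℝ) 1,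
      (⨆ m : ℕ, |Walsh.S (fun y => Walsh.D (2 ^ (n + 1)) y - Walsh.D (2 ^ n) y) (2 ^ m) x|)
        = Walsh.D (2 ^ n) x)
    ∧ ∀ p : ℝ, 0 < p → p ≤ 1 →
        Walsh.HpNorm p (fun y => Walsh.D (2 ^ (n + 1)) y - Walsh.D (2 ^ n) y)
          = ENNReal.ofReal ((2:ℝ) ^ ((n:ℝ) * (1 - 1/p))) := by
  refine ⟨fun x hx => ?_, fun p hp _ => ?_⟩
  · simp only [Walsh.abs_S_D_two_pow_succ_sub n _ hx]
    exact ciSup_ite_lt (Walsh.D_two_pow_nonneg hx n) n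
  · rw [Walsh.HpNorm, setLIntegral_congr_fun measurableSet_Ico fun x hx => by
        rw [Walsh.maxS_D_two_pow_succ_sub n hx],
      Walsh.lintegral_ofReal_D_two_pow_rpow n hp,
      ENNReal.ofReal_rpow_of_nonneg (by positivity) (by positivity), ← Real.rpow_mul zero_le_two]
    congr 2
    field_simp
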